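/- arXiv:2209.02644 — 3 statements merged into one kernel-verified Lean document; each statement's English description precedes it below -/
import Mathlib

section
/- Let p be an odd prime, n = p−1, and let D_glp be the n×n matrix with (i,h) entry equal to (i·h mod p). For any ordered pair (a,b) with 1 ≤ a ≠ b ≤ n, there is exactly one row of D_glp in which b appears immediately to the right of a (i.e., exactly one pair (i,h) with 1 ≤ h ≤ n−1 such that row i has entry a at position h and entry b at position h+1). -/
/-!
Reduce modulo `p`: row `i` carries `a` then `b` at positions `h, h + 1` exactly when
`i * h = a` and `i * (h + 1) = b` in `ZMod p`. Subtracting, `i = b - a`, which is nonzero, so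
`h = a / (b - a)` is forced as well. This solution has `i ≠ 0`, and `h ≠ 0, -1` because
`a, b ≠ 0`, so its representatives are a genuine row and a position `h ≤ p - 2`.
-/

open Finset

theorem existsUnique_mul_eq_and_mul_add_one_eq {K : Type*} [Field K] {a b : K} (hab : a ≠ b) :
    ∃! q : K × K, q.1 * q.2 = a ∧ q.1 * (q.2 + 1) = b := by
  have hba : b - a ≠ 0 := sub_ne_zero.mpr hab.symm
  refine ⟨(b - a, a / (b - a)), ⟨mul_div_cancel₀ a hba, ?_⟩, ?_⟩
  · rw [mul_add, mul_div_cancel₀ a hba]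
    ring
  · rintro ⟨i, h⟩ ⟨hih, hih1⟩
    have hi : i = b - a := by rw [← hih, ← hih1]; ring
    subst hi
    simp only [Prod.mk.injEq, true_and]
    rw [eq_div_iff hba, mul_comm]
    exact hih

namespace ZMod

theorem mod_eq_iff_natCast_eq {p m c : ℕ} (hc : c < p) : m % p = c ↔ (m : ZMod p) = c := by
  rw [natCast_eq_natCast_iff', Nat.mod_eq_of_lt hc]

theorem natCast_ne_zero_of_mem_Icc {p m : ℕ} (hm : m ∈ Icc 1 (p - 1)) : (m : ZMod p) ≠ 0 := by
  rw [mem_Icc] at hm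
  rw [Ne, natCast_eq_zero_iff]
  exact Nat.not_dvd_of_pos_of_lt (by omega) (by omega)

theorem val_mem_Icc_of_ne_zero {p : ℕ} [NeZero p] {x : ZMod p} (hx : x ≠ 0) :
    x.val ∈ Icc 1 (p - 1) := by
  have := val_lt x
  have := val_pos.mpr hx
  rw [mem_Icc]
  omega

theorem val_mem_Icc_of_ne_zero_of_add_one_ne_zero {p : ℕ} [NeZero p] {x : ZMod p} (hx : x ≠ 0)
    (hx1 : x + 1 ≠ 0) : x.val ∈ Icc 1 (p - 2) := by
  have hlt : x.val + 1 < p := lt_of_le_of_ne (val_lt x) fun h => hx1 <| by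
    rw [← natCast_zmod_val x, ← Nat.cast_add_one, h, natCast_self]
  have := val_pos.mpr hx
  rw [mem_Icc]
  omega

end ZMod

theorem glp_pair_balanced_general (p : ℕ) (hp : p.Prime)
    (a b : ℕ) (ha : a ∈ Finset.Icc 1 (p - 1)) (hb : b ∈ Finset.Icc 1 (p - 1))
    (hab : a ≠ b) :
    ((Finset.Icc 1 (p - 1) ×ˢ Finset.Icc 1 (p - 2)).filter
      (fun q => q.1 * q.2 % p = a ∧ q.1 * (q.2 + 1) % p = b)).card = 1 := by
  have : Fact p.Prime := ⟨hp⟩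
  have hap : a < p := by have := mem_Icc.mp ha; omega
  have hbp : b < p := by have := mem_Icc.mp hb; omega
  have hab' : (a : ZMod p) ≠ b := fun h => hab <| by
    rw [← ZMod.val_cast_of_lt hap, ← ZMod.val_cast_of_lt hbp, h]
  obtain ⟨⟨i, h⟩, ⟨hih, hih1⟩, huniq⟩ := existsUnique_mul_eq_and_mul_add_one_eq hab'
  simp only [ZMod.mod_eq_iff_natCast_eq hap, ZMod.mod_eq_iff_natCast_eq hbp, Nat.cast_mul,
    Nat.cast_add, Nat.cast_one]
  refine card_eq_one.mpr ⟨(i.val, h.val), eq_singleton_iff_unique_mem.mpr ⟨?_, ?_⟩⟩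
  · have hi : i ≠ 0 := by
      rintro rfl; rw [zero_mul] at hih hih1; exact hab' (hih.symm.trans hih1)
    have hh : h ≠ 0 := by
      rintro rfl; rw [mul_zero] at hih; exact ZMod.natCast_ne_zero_of_mem_Icc ha hih.symm
    have hh1 : h + 1 ≠ 0 := by
      intro h0; rw [h0, mul_zero] at hih1; exact ZMod.natCast_ne_zero_of_mem_Icc hb hih1.symm
    simp only [mem_filter, mem_product, ZMod.natCast_zmod_val, hih, hih1, and_true]
    exact ⟨ZMod.val_mem_Icc_of_ne_zero hi, ZMod.val_mem_Icc_of_ne_zero_of_add_one_ne_zero hh hh1⟩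
  · rintro ⟨x, y⟩ hxy
    simp only [mem_filter, mem_product, mem_Icc] at hxy
    obtain ⟨⟨⟨-, hx⟩, -, hy⟩, hxy⟩ := hxy
    obtain ⟨rfl, rfl⟩ := Prod.mk.inj (huniq (x, y) hxy)
    rw [ZMod.val_cast_of_lt (by omega), ZMod.val_cast_of_lt (by omega)]

/-- Pair balance of the good lattice point design: for an odd prime p, n = p−1,
and any ordered pair (a,b) of distinct symbols in {1,…,n}, there is exactly one
position (i,h) with 1 ≤ i ≤ n, 1 ≤ h ≤ n−1 such that row i of D_glp has entry a
at position h and entry b at position h+1. -/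
theorem glp_pair_balanced (p : ℕ) (hp : p.Prime) (hodd : Odd p)
    (a b : ℕ) (ha : a ∈ Finset.Icc 1 (p - 1)) (hb : b ∈ Finset.Icc 1 (p - 1))
    (hab : a ≠ b) :
    ((Finset.Icc 1 (p - 1) ×ˢ Finset.Icc 1 (p - 2)).filter
      (fun q => q.1 * q.2 % p = a ∧ q.1 * (q.2 + 1) % p = b)).card = 1 :=
  glp_pair_balanced_general p hp a b ha hb hab
end

section
/- Let p be an odd prime, n = p−1, and let D_glp be the n×n matrix with (i,h) entry (i·h mod p). For any two distinct rows i ≠ j, the squared Euclidean distance between the rows satisfies ∑_{h=1}^{n} ((i·h mod p) − (j·h mod p))² ≥ ∑_{c=1}^{n} min(c, p−c)². -/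
/-!
Write `d = i - j`. Modulo `p`, the `h`-th coordinate difference `(i h mod p) - (j h mod p)` is
congruent to `d h`, so its absolute value is at least that of the least absolute residue of `d h`,
namely `min c (p - c)` with `c = d h mod p`. Since `d` is a unit mod `p`, `h ↦ d h` permutes the
nonzero residues, so summing these bounds over `h` gives exactly `∑_{c=1}^{p-1} min(c, p-c)²`.
-/

open Finset

namespace ZMod

variable {n : ℕ} [NeZero n]

lemma valMinAbs_intCast_sq_le (y : ℤ) : (y : ZMod n).valMinAbs ^ 2 ≤ y ^ 2 :=
  Int.natAbs_le_iff_sq_le.mp <|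
    natAbs_min_of_le_div_two n _ _ (coe_valMinAbs _) (natAbs_valMinAbs_le _)

lemma valMinAbs_natCast_sq {c : ℕ} (hc : c < n) :
    (c : ZMod n).valMinAbs ^ 2 = min (c : ℤ) (n - c) ^ 2 := by
  rw [← Int.natAbs_sq, valMinAbs_natAbs_eq_min, val_cast_of_lt hc, Nat.cast_min,
    Nat.cast_sub hc.le]

lemma val_mem_Icc_one_iff {x : ZMod n} : x.val ∈ Icc 1 (n - 1) ↔ x ≠ 0 := by
  have := x.val_lt
  rw [mem_Icc, ← val_ne_zero]
  omega

lemma natCast_ne_zero_of_mem_Icc_s3 {h : ℕ} (hh : h ∈ Icc 1 (n - 1)) : (h : ZMod n) ≠ 0 := by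
  rw [← val_mem_Icc_one_iff, val_cast_of_lt (by grind)]
  exact hh

lemma sum_Icc_comp_units_mul {M : Type*} [AddCommMonoid M] (d : (ZMod n)ˣ) (g : ZMod n → M) :
    ∑ h ∈ Icc 1 (n - 1), g (d * h) = ∑ h ∈ Icc 1 (n - 1), g h := by
  refine sum_nbij' (fun h => ((d : ZMod n) * h).val)
    (fun h => ((d⁻¹ : (ZMod n)ˣ) * h : ZMod n).val)
    (fun h hh => ?_) (fun h hh => ?_) (fun h hh => ?_) (fun h hh => ?_) (fun h _ => by simp)
  · exact val_mem_Icc_one_iff.mpr (d.mul_right_eq_zero.not.mpr (natCast_ne_zero_of_mem_Icc_s3 hh))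
  · exact val_mem_Icc_one_iff.mpr
      (d⁻¹.mul_right_eq_zero.not.mpr (natCast_ne_zero_of_mem_Icc_s3 hh))
  all_goals simp [val_cast_of_lt (by grind : h < n)]

end ZMod

theorem glp_rows_sq_dist_lower_bound_general (p : ℕ) (hp : p.Prime)
    (i j : ℕ) (hi : i ∈ Finset.Icc 1 (p - 1)) (hj : j ∈ Finset.Icc 1 (p - 1))
    (hij : i ≠ j) :
    ∑ c ∈ Finset.Icc 1 (p - 1), ((min c (p - c) : ℤ)) ^ 2 ≤
      ∑ h ∈ Finset.Icc 1 (p - 1), ((i * h % p : ℤ) - (j * h % p : ℤ)) ^ 2 := by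
  have := Fact.mk hp
  have hd : (i : ZMod p) - j ≠ 0 := by
    rw [sub_ne_zero, Ne, ZMod.natCast_eq_natCast_iff', Nat.mod_eq_of_lt (by grind),
      Nat.mod_eq_of_lt (by grind)]
    exact hij
  calc ∑ c ∈ Icc 1 (p - 1), ((min c (p - c) : ℤ)) ^ 2
      = ∑ c ∈ Icc 1 (p - 1), (c : ZMod p).valMinAbs ^ 2 :=
        sum_congr rfl fun c hc => (ZMod.valMinAbs_natCast_sq (by grind)).symm
    _ = ∑ h ∈ Icc 1 (p - 1), (((i : ZMod p) - j) * h).valMinAbs ^ 2 :=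
        (ZMod.sum_Icc_comp_units_mul (Units.mk0 _ hd) (·.valMinAbs ^ 2)).symm
    _ ≤ ∑ h ∈ Icc 1 (p - 1), ((i * h % p : ℤ) - (j * h % p : ℤ)) ^ 2 :=
        sum_le_sum fun h _ => by
          simpa [sub_mul] using
            ZMod.valMinAbs_intCast_sq_le (n := p) ((i * h % p : ℤ) - (j * h % p : ℤ))

/-- For an odd prime p, n = p−1, and distinct rows i ≠ j of the good lattice
point design, the squared Euclidean distance between the rows is at least
∑_{c=1}^{n} min(c, p−c)². -/
theorem glp_rows_sq_dist_lower_bound (p : ℕ) (hp : p.Prime) (hodd : Odd p)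
    (i j : ℕ) (hi : i ∈ Finset.Icc 1 (p - 1)) (hj : j ∈ Finset.Icc 1 (p - 1))
    (hij : i ≠ j) :
    ∑ c ∈ Finset.Icc 1 (p - 1), ((min c (p - c) : ℤ)) ^ 2 ≤
      ∑ h ∈ Finset.Icc 1 (p - 1), ((i * h % p : ℤ) - (j * h % p : ℤ)) ^ 2 :=
  glp_rows_sq_dist_lower_bound_general p hp i j hi hj hij
end

section
/- Let p be an odd prime and n = p−1. For each l ∈ {2,…,n−1} with l ≠ n, let l' ∈ {1,…,n} be the unique element with l·l' ≡ 1 (mod p). Then l' ≠ l unless l² ≡ 1 (mod p), and the L2-distance between rows 1 and l of the good lattice point design equals the L2-distance between rows 1 and l': ∑_{h=1}^{n} (h mod p − l·h mod p)² = ∑_{h=1}^{n} (h mod p − l'·h mod p)². -/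
/-!
Multiplication by `a` modulo `p` permutes the nonzero residues whenever `a * b ≡ 1 (mod p)`,
with inverse multiplication by `b`. Reindexing the sum for row `a` by this permutation turns
each pair `(h, a h mod p)` into `(b h mod p, h)`, which is the pair of row `b` read backwards;
the squared distance does not see the order.
-/

open Finset

namespace Nat

variable {p a b : ℕ}

theorem mul_mod_mul_mod_cancel (hab : a * b % p = 1) {h : ℕ} (hh : h < p) :
    a * (b * h % p) % p = h := by
  rw [Nat.mul_mod_mod, ← Nat.mul_assoc, Nat.mul_mod, hab, one_mul, Nat.mod_mod,
    Nat.mod_eq_of_lt hh]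

theorem mul_mod_mem_Icc_one_pred (hab : a * b % p = 1) {h : ℕ} (hh : h ∈ Icc 1 (p - 1)) :
    a * h % p ∈ Icc 1 (p - 1) := by
  rw [mem_Icc] at hh ⊢
  have hba : b * a % p = 1 := by rwa [Nat.mul_comm]
  have hlt : a * h % p < p := Nat.mod_lt _ (by omega)
  refine ⟨Nat.pos_of_ne_zero fun h0 => ?_, by omega⟩
  have := mul_mod_mul_mod_cancel hba (show h < p by omega)
  rw [h0, Nat.mul_zero, Nat.zero_mod] at this
  omega

theorem sum_Icc_mul_mod_swap {M : Type*} [AddCommMonoid M] (f : ℕ → ℕ → M)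
    (hab : a * b % p = 1) :
    ∑ h ∈ Icc 1 (p - 1), f h (a * h % p) = ∑ h ∈ Icc 1 (p - 1), f (b * h % p) h := by
  have hba : b * a % p = 1 := by rwa [Nat.mul_comm]
  have hlt {h : ℕ} (hh : h ∈ Icc 1 (p - 1)) : h < p := by rw [mem_Icc] at hh; omega
  refine sum_nbij' (a * · % p) (b * · % p) (fun h hh => mul_mod_mem_Icc_one_pred hab hh)
    (fun h hh => mul_mod_mem_Icc_one_pred hba hh)
    (fun h hh => mul_mod_mul_mod_cancel hba (hlt hh))
    (fun h hh => mul_mod_mul_mod_cancel hab (hlt hh)) fun h hh => ?_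
  simp only [mul_mod_mul_mod_cancel hba (hlt hh)]

theorem sum_sq_sub_mul_mod_eq_of_mul_mod_eq_one (hab : a * b % p = 1) :
    ∑ h ∈ Icc 1 (p - 1), ((h : ℤ) - (a * h % p : ℕ)) ^ 2 =
      ∑ h ∈ Icc 1 (p - 1), ((h : ℤ) - (b * h % p : ℕ)) ^ 2 := by
  rw [sum_Icc_mul_mod_swap (fun x y => ((x : ℤ) - y) ^ 2) hab]
  exact sum_congr rfl fun h _ => sub_sq_comm _ _

end Nat

theorem glp_inverse_row_same_distance_general (p : ℕ) (l l' : ℕ)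
    (hinv : l * l' % p = 1) :
    (l' = l → l * l % p = 1) ∧
    ∑ h ∈ Finset.Icc 1 (p - 1), ((h % p : ℤ) - (l * h % p : ℤ)) ^ 2 =
      ∑ h ∈ Finset.Icc 1 (p - 1), ((h % p : ℤ) - (l' * h % p : ℤ)) ^ 2 := by
  refine ⟨by rintro rfl; exact hinv, ?_⟩
  have hcast (k : ℕ) : ∑ h ∈ Icc 1 (p - 1), ((h % p : ℤ) - (k * h % p : ℤ)) ^ 2 =
      ∑ h ∈ Icc 1 (p - 1), ((h : ℤ) - (k * h % p : ℕ)) ^ 2 := by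
    refine sum_congr rfl fun h hh => ?_
    rw [mem_Icc] at hh
    rw [Int.emod_eq_of_lt (by omega) (by omega)]
    push_cast
    rfl
  rw [hcast, hcast]
  exact Nat.sum_sq_sub_mul_mod_eq_of_mul_mod_eq_one hinv

/-- For an odd prime p, n = p−1, l ∈ {2,…,n−1}, and l' the (unique) element of
{1,…,n} with l·l' ≡ 1 (mod p): l' ≠ l unless l² ≡ 1 (mod p), and the squared
L2-distance between rows 1 and l of the good lattice point design equals that
between rows 1 and l'. -/
theorem glp_inverse_row_same_distance (p : ℕ) (hp : p.Prime) (hodd : Odd p)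
    (l l' : ℕ) (hl : 2 ≤ l) (hl2 : l ≤ p - 2)
    (hl' : l' ∈ Finset.Icc 1 (p - 1)) (hinv : l * l' % p = 1) :
    (l' = l → l * l % p = 1) ∧
    ∑ h ∈ Finset.Icc 1 (p - 1), ((h % p : ℤ) - (l * h % p : ℤ)) ^ 2 =
      ∑ h ∈ Finset.Icc 1 (p - 1), ((h % p : ℤ) - (l' * h % p : ℤ)) ^ 2 :=
  glp_inverse_row_same_distance_general p l l' hinv
end
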